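/- Let R ∈ ℝ^{n×n} be an upper triangular matrix with nonzero diagonal entries r_{jj} (e.g., the R-factor of the QR factorization of a full column rank matrix, or the Cholesky factor of a symmetric positive definite matrix). Then for every i = 1, 2, …, n: min_{1 ≤ j ≤ n} |r_{jj}| ≤ λ_i(R) ≤ max_{1 ≤ j ≤ i} ‖R_{1:j, j}‖₂, where R_{1:j, j} denotes the vector formed by the first j entries of the j-th column of R. -/

import Mathlib

open Matrix

noncomputable section

/-- Euclidean norm of a real vector. -/
def euclNorm {m : ℕ} (x : Fin m → ℝ) : ℝ := Real.sqrt (∑ k, x k ^ 2)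

/-- The lattice vector `A z` for an integer vector `z`. -/
def latticeVec {m n : ℕ} (A : Matrix (Fin m) (Fin n) ℝ) (z : Fin n → ℤ) : Fin m → ℝ :=
  A.mulVec fun k => (z k : ℝ)

/-- The `i`-th successive minimum of the lattice generated by `A`: the smallest `r ≥ 0` such
that the closed ball of radius `r` centered at the origin contains `i` linearly independent
lattice vectors. -/
def succMin {m n : ℕ} (A : Matrix (Fin m) (Fin n) ℝ) (i : ℕ) : ℝ :=
  sInf {r : ℝ | 0 ≤ r ∧ ∃ v : Fin i → (Fin n → ℤ),
    LinearIndependent ℝ (fun j => latticeVec A (v j)) ∧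
    ∀ j, euclNorm (latticeVec A (v j)) ≤ r}

/-- `R` is the Cholesky factor of `G`: `R` is upper triangular with positive diagonal
entries and `Rᵀ * R = G`. -/
def IsCholesky {n : ℕ} (G R : Matrix (Fin n) (Fin n) ℝ) : Prop :=
  R.BlockTriangular id ∧ (∀ j, 0 < R j j) ∧ Rᵀ * R = G

/-!
If `j` is the last nonzero coordinate of an integer vector `z`, triangularity gives
`(R z)_j = r_jj z_j` with `|z_j| ≥ 1`, so every nonzero lattice vector has length at least
`min |r_jj|`. Conversely the first `i` columns of the invertible matrix `R` are independent
lattice vectors, and by triangularity the `j`-th column has the length of `R_{1:j, j}`.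
-/

lemma euclNorm_nonneg {m : ℕ} (x : Fin m → ℝ) : 0 ≤ euclNorm x := Real.sqrt_nonneg _

lemma abs_le_euclNorm {m : ℕ} (x : Fin m → ℝ) (k : Fin m) : |x k| ≤ euclNorm x := by
  rw [← Real.sqrt_sq_eq_abs]
  exact Real.sqrt_le_sqrt <|
    Finset.single_le_sum (f := fun k => x k ^ 2) (fun _ _ => sq_nonneg _) (Finset.mem_univ k)

lemma latticeVec_single {m n : ℕ} (A : Matrix (Fin m) (Fin n) ℝ) (j : Fin n) :
    latticeVec A (Pi.single j 1) = A.col j := by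
  have : (fun k => ((Pi.single j 1 : Fin n → ℤ) k : ℝ)) = Pi.single j 1 := by
    funext k
    by_cases h : k = j <;> simp [h]
  rw [latticeVec, this, mulVec_single_one]

section SuccMin

variable {m n i : ℕ} (A : Matrix (Fin m) (Fin n) ℝ)

lemma succMin_le {v : Fin i → Fin n → ℤ} (hv : LinearIndependent ℝ fun j => latticeVec A (v j))
    {r : ℝ} (hr0 : 0 ≤ r) (hr : ∀ j, euclNorm (latticeVec A (v j)) ≤ r) : succMin A i ≤ r :=
  csInf_le ⟨0, fun _ hs => hs.1⟩ ⟨hr0, v, hv, hr⟩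

/-- The independent family `v` is only there to make the infimum defining `succMin A i`
range over a nonempty set (`sInf ∅ = 0`). -/
lemma le_succMin (hi : 0 < i) {v : Fin i → Fin n → ℤ}
    (hv : LinearIndependent ℝ fun j => latticeVec A (v j)) {c : ℝ}
    (hc : ∀ z, latticeVec A z ≠ 0 → c ≤ euclNorm (latticeVec A z)) : c ≤ succMin A i := by
  let r := ∑ j, euclNorm (latticeVec A (v j))
  have hr : ∀ j, euclNorm (latticeVec A (v j)) ≤ r := fun j =>
    Finset.single_le_sum (f := fun j => euclNorm (latticeVec A (v j)))
      (fun _ _ => euclNorm_nonneg _) (Finset.mem_univ j)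
  refine le_csInf ⟨r, Finset.sum_nonneg fun _ _ => euclNorm_nonneg _, v, hv, hr⟩ ?_
  rintro s ⟨-, w, hw, hws⟩
  exact (hc _ (hw.ne_zero ⟨0, hi⟩)).trans (hws _)

end SuccMin

lemma exists_last_ne_zero {ι M : Type*} [Fintype ι] [LinearOrder ι] [Zero M] {x : ι → M}
    (hx : x ≠ 0) : ∃ j, x j ≠ 0 ∧ ∀ k, j < k → x k = 0 := by
  classical
  obtain ⟨k, hk⟩ := Function.ne_iff.mp hx
  obtain ⟨j, hj, hmax⟩ :=
    (Finset.univ.filter (x · ≠ 0)).exists_max_image id ⟨k, by simpa using hk⟩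
  refine ⟨j, by simpa using hj, fun l hjl => ?_⟩
  by_contra hl
  exact (hmax l (by simpa using hl)).not_gt hjl

lemma mulVec_apply_eq_diag_mul {ι α : Type*} [Fintype ι] [LinearOrder ι]
    [NonUnitalNonAssocSemiring α] {R : Matrix ι ι α} (hR : R.BlockTriangular id) {x : ι → α}
    {j : ι} (hx : ∀ k, j < k → x k = 0) : (R *ᵥ x) j = R j j * x j := by
  refine Finset.sum_eq_single j (fun k _ hkj => ?_) (by simp)
  rcases lt_or_gt_of_ne hkj with hk | hk
  · simp [hR (show id k < id j from hk)]
  · simp [hx k hk]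

variable {n : ℕ} {R : Matrix (Fin n) (Fin n) ℝ}

lemma sInf_abs_diag_le_euclNorm (hR : R.BlockTriangular id) {z : Fin n → ℤ}
    (hz : latticeVec R z ≠ 0) :
    sInf (Set.range fun j => |R j j|) ≤ euclNorm (latticeVec R z) := by
  obtain ⟨j, hzj, hlast⟩ :=
    exists_last_ne_zero (x := z) fun h0 => hz (by simp [latticeVec, h0, ← Pi.zero_def])
  have hcoord : latticeVec R z j = R j j * (z j : ℝ) :=
    mulVec_apply_eq_diag_mul hR fun k hk => by simp [hlast k hk]
  have hzj_abs : (1 : ℝ) ≤ |(z j : ℝ)| := by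
    rw [← Int.cast_abs]
    exact_mod_cast Int.one_le_abs hzj
  calc sInf (Set.range fun j => |R j j|) ≤ |R j j| :=
        csInf_le (Set.finite_range _).bddBelow ⟨j, rfl⟩
    _ ≤ |R j j| * |(z j : ℝ)| := le_mul_of_one_le_right (abs_nonneg _) hzj_abs
    _ = |latticeVec R z j| := by rw [hcoord, abs_mul]
    _ ≤ euclNorm (latticeVec R z) := abs_le_euclNorm _ _

lemma euclNorm_col_of_blockTriangular (hR : R.BlockTriangular id) (j : Fin n) :
    euclNorm (R.col j) =
      Real.sqrt (∑ k : Fin n, if (k : ℕ) ≤ (j : ℕ) then R k j ^ 2 else 0) := by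
  refine congrArg Real.sqrt (Finset.sum_congr rfl fun k _ => ?_)
  split_ifs with hk
  · rfl
  · simp [hR (show id j < id k from Fin.lt_def.mpr (not_le.mp hk))]

lemma linearIndependent_latticeVec_single (hR : R.BlockTriangular id) (hdiag : ∀ j, R j j ≠ 0)
    {i : ℕ} (hin : i ≤ n) :
    LinearIndependent ℝ fun j : Fin i => latticeVec R (Pi.single (Fin.castLE hin j) 1) := by
  have hunit : IsUnit R := by
    rw [isUnit_iff_isUnit_det, det_of_isUpperTriangular hR]
    exact isUnit_iff_ne_zero.mpr (Finset.prod_ne_zero_iff.mpr fun j _ => hdiag j)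
  simp only [latticeVec_single]
  exact (linearIndependent_cols_of_isUnit hunit).comp _ (Fin.castLE_injective hin)

theorem statement8 {n : ℕ} (R : Matrix (Fin n) (Fin n) ℝ)
    (hR : R.BlockTriangular id) (hdiag : ∀ j, R j j ≠ 0) :
    ∀ i : ℕ, 1 ≤ i → i ≤ n →
      sInf (Set.range fun j : Fin n => |R j j|) ≤ succMin R i ∧
      succMin R i ≤
        sSup {x : ℝ | ∃ j : Fin n, (j : ℕ) < i ∧
          x = Real.sqrt (∑ k : Fin n, if (k : ℕ) ≤ (j : ℕ) then R k j ^ 2 else 0)} := by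
  intro i hi hin
  have hcols := linearIndependent_latticeVec_single hR hdiag hin
  refine ⟨le_succMin R hi hcols fun z hz => sInf_abs_diag_le_euclNorm hR hz, ?_⟩
  set T := {x : ℝ | ∃ j : Fin n, (j : ℕ) < i ∧
    x = Real.sqrt (∑ k : Fin n, if (k : ℕ) ≤ (j : ℕ) then R k j ^ 2 else 0)}
  have hT : BddAbove T := by
    refine ((Set.finite_range fun j : Fin n =>
      Real.sqrt (∑ k : Fin n, if (k : ℕ) ≤ (j : ℕ) then R k j ^ 2 else 0)).subset ?_).bddAbove
    rintro _ ⟨j, -, rfl⟩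
    exact ⟨j, rfl⟩
  refine succMin_le R hcols (Real.sSup_nonneg fun _ ⟨_, _, hx⟩ => hx ▸ Real.sqrt_nonneg _)
    fun j => le_csSup hT ⟨Fin.castLE hin j, j.isLt, ?_⟩
  rw [latticeVec_single, euclNorm_col_of_blockTriangular hR]
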